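/- arXiv:1607.00355 — 2 statements merged into one kernel-verified Lean document; each statement's English description precedes it below -/
import Mathlib

section
/- The function φ(u) = H((1 - √(1-u²))/2) is strictly convex on [0,1]. -/
/-!
Put `s = √(1 - u²)`. Then `φ(u) = 1 - ((1 - s) ln (1 - s) + (1 + s) ln (1 + s)) / (2 ln 2)`, and two
differentiations give `φ''(u) = (ℓ(s) - 2s) / (2 ln 2 · s³)` with `ℓ(s) = ln (1 + s) - ln (1 - s)`.
This is positive on `(0, 1)` because `ℓ(s) = 2 (s + s³/3 + s⁵/5 + ⋯) > 2s`.
-/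

open Real

noncomputable def binEnt (q : ℝ) : ℝ := -(q * Real.logb 2 q) - (1 - q) * Real.logb 2 (1 - q)

noncomputable def Bh (q : ℝ) : ℝ := 2 * Real.sqrt (q * (1 - q))

noncomputable def phi (u : ℝ) : ℝ := binEnt ((1 - Real.sqrt (1 - u ^ 2)) / 2)

noncomputable def symMulLog (s : ℝ) : ℝ := (1 - s) * log (1 - s) + (1 + s) * log (1 + s)

noncomputable def logRatio (s : ℝ) : ℝ := log (1 + s) - log (1 - s)

lemma half_mul_logb_two_half (x : ℝ) :
    x / 2 * logb 2 (x / 2) = x * log x / (2 * log 2) - x / 2 := by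
  rcases eq_or_ne x 0 with rfl | hx
  · simp
  · rw [logb, log_div hx two_ne_zero]
    field_simp

lemma binEnt_one_sub_div_two (s : ℝ) :
    binEnt ((1 - s) / 2) = 1 - symMulLog s / (2 * log 2) := by
  rw [binEnt, show 1 - (1 - s) / 2 = (1 + s) / 2 by ring, half_mul_logb_two_half,
    half_mul_logb_two_half, symMulLog]
  ring

lemma phi_eq_one_sub_symMulLog : phi = fun u => 1 - symMulLog √(1 - u ^ 2) / (2 * log 2) :=
  funext fun _ => binEnt_one_sub_div_two _

lemma continuous_phi : Continuous phi := by
  rw [phi_eq_one_sub_symMulLog]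
  unfold symMulLog
  fun_prop

lemma hasDerivAt_symMulLog {s : ℝ} (hs : |s| < 1) : HasDerivAt symMulLog (logRatio s) s := by
  obtain ⟨hs₀, hs₁⟩ := abs_lt.1 hs
  have h : HasDerivAt symMulLog ((log (1 - s) + 1) * -1 + (log (1 + s) + 1) * 1) s :=
    ((hasDerivAt_mul_log (by linarith)).comp s ((hasDerivAt_id' s).const_sub 1)).add
      ((hasDerivAt_mul_log (by linarith)).comp s ((hasDerivAt_id' s).const_add 1))
  exact h.congr_deriv (by rw [logRatio]; ring)

lemma hasDerivAt_logRatio {s : ℝ} (hs : |s| < 1) : HasDerivAt logRatio (2 / (1 - s ^ 2)) s := by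
  obtain ⟨hs₀, hs₁⟩ := abs_lt.1 hs
  have hadd : 1 + s ≠ 0 := by linarith
  have hsub : 1 - s ≠ 0 := by linarith
  have h : HasDerivAt logRatio ((1 + s)⁻¹ * 1 - (1 - s)⁻¹ * -1) s :=
    ((hasDerivAt_log hadd).comp s ((hasDerivAt_id' s).const_add 1)).sub
      ((hasDerivAt_log hsub).comp s ((hasDerivAt_id' s).const_sub 1))
  have hsq : 1 - s ^ 2 ≠ 0 := by
    rw [show 1 - s ^ 2 = (1 + s) * (1 - s) by ring]; exact mul_ne_zero hadd hsub
  refine h.congr_deriv ?_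
  field_simp
  ring

lemma two_mul_lt_logRatio {s : ℝ} (hs₀ : 0 < s) (hs₁ : s < 1) : 2 * s < logRatio s := by
  have hsum := hasSum_log_sub_log_of_abs_lt_one (abs_lt.2 ⟨by linarith, hs₁⟩)
  have hle := sum_le_hasSum (Finset.range 2) (fun k _ => by positivity) hsum
  simp only [Finset.sum_range_succ, Finset.sum_range_zero] at hle
  norm_num at hle
  rw [logRatio]
  nlinarith [pow_pos hs₀ 3]

lemma hasDerivAt_sqrt_one_sub_sq {x : ℝ} (hx : |x| < 1) :
    HasDerivAt (fun u => √(1 - u ^ 2)) (-x / √(1 - x ^ 2)) x := by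
  have hpos : 0 < 1 - x ^ 2 := by rw [sub_pos, sq_lt_one_iff_abs_lt_one]; exact hx
  convert ((hasDerivAt_pow 2 x).const_sub 1).sqrt hpos.ne' using 1
  field_simp
  ring

lemma sqrt_one_sub_sq_mem_Ioo {x : ℝ} (hx : x ∈ Set.Ioo 0 1) : √(1 - x ^ 2) ∈ Set.Ioo 0 1 := by
  obtain ⟨hx₀, hx₁⟩ := hx
  exact ⟨sqrt_pos.2 (by nlinarith), (sqrt_lt' one_pos).2 (by nlinarith)⟩

lemma hasDerivAt_phi {x : ℝ} (hx : x ∈ Set.Ioo 0 1) :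
    HasDerivAt phi (x * logRatio √(1 - x ^ 2) / (2 * log 2 * √(1 - x ^ 2))) x := by
  obtain ⟨hs₀, hs₁⟩ := sqrt_one_sub_sq_mem_Ioo hx
  have hS := hasDerivAt_sqrt_one_sub_sq (abs_lt.2 ⟨by linarith [hx.1], hx.2⟩)
  have h := (((hasDerivAt_symMulLog (abs_lt.2 ⟨by linarith, hs₁⟩)).comp x hS).div_const
    (2 * log 2)).const_sub 1
  rw [phi_eq_one_sub_symMulLog]
  refine h.congr_deriv ?_
  field_simp

lemma hasDerivAt_deriv_phi {x : ℝ} (hx : x ∈ Set.Ioo 0 1) :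
    HasDerivAt (deriv phi)
      ((logRatio √(1 - x ^ 2) - 2 * √(1 - x ^ 2)) / (2 * log 2 * √(1 - x ^ 2) ^ 3)) x := by
  have hderiv : deriv phi =ᶠ[nhds x]
      fun u => u * logRatio √(1 - u ^ 2) / (2 * log 2 * √(1 - u ^ 2)) := by
    filter_upwards [Ioo_mem_nhds hx.1 hx.2] with u hu using (hasDerivAt_phi hu).deriv
  refine HasDerivAt.congr_of_eventuallyEq ?_ hderiv
  obtain ⟨hs₀, hs₁⟩ := sqrt_one_sub_sq_mem_Ioo hx
  have hx' : |x| < 1 := abs_lt.2 ⟨by linarith [hx.1], hx.2⟩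
  have hS := hasDerivAt_sqrt_one_sub_sq hx'
  have hN := (hasDerivAt_id' x).mul ((hasDerivAt_logRatio (abs_lt.2 ⟨by linarith, hs₁⟩)).comp x hS)
  have h := hN.div (hS.const_mul (2 * log 2)) (by positivity)
  refine h.congr_deriv ?_
  have hsq : √(1 - x ^ 2) ^ 2 = 1 - x ^ 2 := sq_sqrt (by nlinarith [hx.1, hx.2])
  have hx₀ : x ≠ 0 := hx.1.ne'
  simp only [Function.comp_apply, Pi.mul_apply, hsq, sub_sub_cancel]
  field_simp
  linear_combination logRatio √(1 - x ^ 2) * hsq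

theorem phi_strictConvex : StrictConvexOn ℝ (Set.Icc (0:ℝ) 1) phi := by
  refine strictConvexOn_of_deriv2_pos (convex_Icc 0 1) continuous_phi.continuousOn fun x hx => ?_
  rw [interior_Icc] at hx
  obtain ⟨hs₀, hs₁⟩ := sqrt_one_sub_sq_mem_Ioo hx
  rw [Function.iterate_succ_apply, Function.iterate_one, (hasDerivAt_deriv_phi hx).deriv]
  have := two_mul_lt_logRatio hs₀ hs₁
  have := log_pos one_lt_two
  exact div_pos (by linarith) (by positivity)
end

section
/- For all u ∈ [0,1], φ(u) ≤ u, with equality if and only if u ∈ {0,1}, where φ(u) = H((1 - √(1-u²))/2). -/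
open Real

/-!
For `q = (1 - √(1 - u²)) / 2` one has `Bh q = 2√(q(1 - q)) = u`, so the claim is the strict bound
`H(q) < 2√(q(1 - q))` for `q ∉ {0, 1/2, 1}`. In nats, with `u = Bh q`, two elementary bounds cover
`(0, 1)` between them:
* `-x log x < √x (1 - x)` (which is `t < sinh t` for `t = -log √x`) gives `H(q) < (u/2) √(1 + u)`,
  and this is `≤ u log 2` as long as `1 + u ≤ 4 (log 2)²`, in particular for `u ≤ 0.9`;
* the strict Pinsker bound `H(q) < log 2 - 2 (q - 1/2)² = log 2 - (1 - u²)/2`, whose derivative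
  is `s < artanh s`, gives `H(q) < u log 2` as soon as `2 log 2 ≤ 1 + u`, i.e. `u ≳ 0.39`.
-/

lemma sub_inv_lt_two_mul_log {t : ℝ} (ht₀ : 0 < t) (ht₁ : t < 1) : t - t⁻¹ < 2 * log t := by
  have := sinh_lt_self_iff.2 (log_neg ht₀ ht₁)
  rw [sinh_log ht₀] at this
  linarith

lemma negMulLog_lt_sqrt_mul_one_sub {x : ℝ} (hx₀ : 0 < x) (hx₁ : x < 1) :
    negMulLog x < √x * (1 - x) := by
  have ht₀ : 0 < √x := sqrt_pos.2 hx₀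
  have hsq : √x ^ 2 = x := sq_sqrt hx₀.le
  have hlog : log x = 2 * log √x := by rw [log_sqrt hx₀.le]; ring
  have ht₁ : √x < 1 := by simpa using sqrt_lt_sqrt hx₀.le hx₁
  have key := mul_lt_mul_of_pos_left (sub_inv_lt_two_mul_log ht₀ ht₁) (pow_pos ht₀ 2)
  rw [negMulLog, hlog]
  field_simp at key
  nlinarith

lemma binEntropy_lt_sqrt_mul_add_sqrt {p : ℝ} (hp₀ : 0 < p) (hp₁ : p < 1) :
    binEntropy p < √(p * (1 - p)) * (√p + √(1 - p)) := by
  have h₁ := negMulLog_lt_sqrt_mul_one_sub hp₀ hp₁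
  have h₂ := negMulLog_lt_sqrt_mul_one_sub (x := 1 - p) (by linarith) (by linarith)
  rw [sub_sub_cancel] at h₂
  rw [binEntropy_eq_negMulLog_add_negMulLog_one_sub, sqrt_mul hp₀.le]
  have hsq₀ := sq_sqrt hp₀.le
  have hsq₁ := sq_sqrt (sub_pos.2 hp₁).le
  linear_combination h₁ + h₂ - √(1 - p) * hsq₀ - √p * hsq₁

lemma two_mul_lt_log_sub_log {s : ℝ} (hs₀ : 0 < s) (hs₁ : s < 1) :
    2 * s < log (1 + s) - log (1 - s) := by
  have h := hasSum_log_sub_log_of_abs_lt_one (abs_lt.2 ⟨by linarith, hs₁⟩)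
  have := lt_hasSum h 0 (fun j _ => by positivity) 1 one_ne_zero (by positivity)
  simpa using this

lemma binEntropy_lt_log_two_sub_sq {p : ℝ} (hp₀ : 0 ≤ p) (hp₁ : p ≤ 1) (hp : p ≠ 2⁻¹) :
    binEntropy p < log 2 - 2 * (p - 2⁻¹) ^ 2 := by
  wlog hlt : p < 2⁻¹ generalizing p
  · have hgt : 2⁻¹ < p := (not_lt.1 hlt).lt_of_ne hp.symm
    have hlt' : 1 - p < 2⁻¹ := by linarith
    have := this (p := 1 - p) (by linarith) (by linarith) hlt'.ne hlt'
    rw [binEntropy_one_sub] at this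
    linarith
  have hmono : StrictMonoOn (fun x ↦ binEntropy x + 2 * (x - 2⁻¹) ^ 2) (Set.Icc 0 2⁻¹) := by
    refine strictMonoOn_of_deriv_pos (convex_Icc 0 2⁻¹) (by fun_prop) fun x hx ↦ ?_
    rw [interior_Icc] at hx
    obtain ⟨hx₀, hx₁⟩ := hx
    have hd : HasDerivAt (fun x ↦ binEntropy x + 2 * (x - 2⁻¹) ^ 2)
        (log (1 - x) - log x + 4 * (x - 2⁻¹)) x := by
      refine ((hasDerivAt_binEntropy hx₀.ne' (by linarith)).fun_add
        (((hasDerivAt_id' x).sub_const 2⁻¹).fun_pow 2 |>.const_mul 2)).congr_deriv ?_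
      push_cast
      ring
    rw [hd.deriv]
    -- with `s = 1 - 2x` the derivative is `log (1 + s) - log (1 - s) - 2s`
    have hs := two_mul_lt_log_sub_log (s := 1 - 2 * x) (by linarith) (by linarith)
    rw [show 1 + (1 - 2 * x) = 2 * (1 - x) by ring, show 1 - (1 - 2 * x) = 2 * x by ring,
      log_mul two_ne_zero (by linarith), log_mul two_ne_zero hx₀.ne'] at hs
    linarith
  have := hmono ⟨hp₀, hlt.le⟩ ⟨by norm_num, le_rfl⟩ hlt
  simp only [binEntropy_two_inv, sub_self] at this
  linarith

lemma Bh_sq {p : ℝ} (hp₀ : 0 ≤ p) (hp₁ : p ≤ 1) : Bh p ^ 2 = 4 * p * (1 - p) := by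
  rw [Bh, mul_pow, sq_sqrt (mul_nonneg hp₀ (sub_nonneg.2 hp₁))]
  ring

lemma sqrt_add_sqrt_one_sub {p : ℝ} (hp₀ : 0 ≤ p) (hp₁ : p ≤ 1) :
    √p + √(1 - p) = √(1 + Bh p) := by
  rw [eq_comm, sqrt_eq_iff_eq_sq (by unfold Bh; positivity) (by positivity), Bh, sqrt_mul hp₀,
    add_sq, sq_sqrt hp₀, sq_sqrt (sub_nonneg.2 hp₁)]
  ring

lemma binEntropy_lt_log_two_mul_Bh {p : ℝ} (hp₀ : 0 < p) (hp₁ : p < 1) (hp : p ≠ 2⁻¹) :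
    binEntropy p < log 2 * Bh p := by
  have hsq := Bh_sq hp₀.le hp₁.le
  have hu₀ : 0 < Bh p := by unfold Bh; have := mul_pos hp₀ (sub_pos.2 hp₁); positivity
  have hu₁ : Bh p < 1 := by
    have : 0 < (p - 2⁻¹) ^ 2 := sq_pos_of_ne_zero (sub_ne_zero.2 hp)
    nlinarith
  have hlog₁ := log_two_gt_d9
  have hlog₂ := log_two_lt_d9
  rcases le_or_gt (Bh p) (9 / 10) with hu | hu
  · have hroot : √(1 + Bh p) ≤ 2 * log 2 := sqrt_le_iff.2 ⟨by positivity, by nlinarith⟩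
    calc binEntropy p < √(p * (1 - p)) * (√p + √(1 - p)) :=
          binEntropy_lt_sqrt_mul_add_sqrt hp₀ hp₁
      _ = Bh p / 2 * √(1 + Bh p) := by rw [sqrt_add_sqrt_one_sub hp₀.le hp₁.le, Bh]; ring
      _ ≤ Bh p / 2 * (2 * log 2) := by gcongr
      _ = log 2 * Bh p := by ring
  · have := binEntropy_lt_log_two_sub_sq hp₀.le hp₁.le hp
    nlinarith

lemma binEnt_eq_binEntropy_div_log_two (p : ℝ) : binEnt p = binEntropy p / log 2 := by
  simp only [binEnt, binEntropy, logb, log_inv]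
  ring

lemma binEnt_lt_Bh {p : ℝ} (hp₀ : 0 < p) (hp₁ : p < 1) (hp : p ≠ 2⁻¹) : binEnt p < Bh p := by
  rw [binEnt_eq_binEntropy_div_log_two, div_lt_iff₀ (log_pos one_lt_two), mul_comm]
  exact binEntropy_lt_log_two_mul_Bh hp₀ hp₁ hp

lemma Bh_half_one_sub_sqrt_one_sub_sq {u : ℝ} (hu₀ : 0 ≤ u) (hu₁ : u ≤ 1) :
    Bh ((1 - √(1 - u ^ 2)) / 2) = u := by
  have hs := sq_sqrt (show 0 ≤ 1 - u ^ 2 by nlinarith)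
  have : (1 - √(1 - u ^ 2)) / 2 * (1 - (1 - √(1 - u ^ 2)) / 2) = (u / 2) ^ 2 := by
    linear_combination -hs / 4
  rw [Bh, this, sqrt_sq (by positivity)]
  ring

lemma phi_zero : phi 0 = 0 := by simp [phi, binEnt]

lemma phi_one : phi 1 = 1 := by
  rw [phi, binEnt_eq_binEntropy_div_log_two, show (1 - √(1 - 1 ^ 2)) / 2 = (2⁻¹ : ℝ) by norm_num,
    binEntropy_two_inv, div_self (log_pos one_lt_two).ne']

lemma phi_lt_self {u : ℝ} (hu₀ : 0 < u) (hu₁ : u < 1) : phi u < u := by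
  have hs₀ : 0 < √(1 - u ^ 2) := sqrt_pos.2 (by nlinarith)
  have hs₁ : √(1 - u ^ 2) < 1 := by
    simpa using sqrt_lt_sqrt (by nlinarith) (by nlinarith : 1 - u ^ 2 < 1)
  calc phi u = binEnt ((1 - √(1 - u ^ 2)) / 2) := rfl
    _ < Bh ((1 - √(1 - u ^ 2)) / 2) := binEnt_lt_Bh (by linarith) (by linarith) (by linarith)
    _ = u := Bh_half_one_sub_sqrt_one_sub_sq hu₀.le hu₁.le

theorem phi_le_id (u : ℝ) (hu : u ∈ Set.Icc (0:ℝ) 1) :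
    phi u ≤ u ∧ (phi u = u ↔ u = 0 ∨ u = 1) := by
  obtain ⟨hu₀, hu₁⟩ := hu
  rcases hu₀.eq_or_lt with rfl | hu₀
  · simp [phi_zero]
  rcases hu₁.eq_or_lt with rfl | hu₁
  · simp [phi_one]
  have hlt := phi_lt_self hu₀ hu₁
  exact ⟨hlt.le, by simp [hlt.ne, hu₀.ne', hu₁.ne]⟩
end
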